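/- arXiv:1606.03858 — 2 statements merged into one kernel-verified Lean document; each statement's English description precedes it below -/
import Mathlib

section
/- Let μ be a Borel probability measure on ℝ^p with M_d(μ) positive definite, and let A ∈ ℝ^{p×p} be invertible and b ∈ ℝ^p. Let μ̃ be the pushforward of μ under the affine map x ↦ Ax + b. Then M_d(μ̃) is also positive definite, and Q_{μ,d}(x) = Q_{μ̃,d}(Ax + b) for all x ∈ ℝ^p, where Q_{ν,d}(x) = v_d(x)^T M_d(ν)^{-1} v_d(x). -/
/-
An affine change of variables `x ↦ A x + b` acts linearly on polynomials of degree `≤ d`: there is a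
matrix `T` with `v_d(A x + b) = T v_d(x)`, invertible when `A` is (its inverse comes from the inverse
affine map). Pushing `μ` forward then gives `M_d(μ̃) = T M_d(μ) Tᵀ`, a congruence, which preserves
positive definiteness, and `v_d(Ax+b)ᵀ (T M Tᵀ)⁻¹ v_d(Ax+b) = v_d(x)ᵀ M⁻¹ v_d(x)`.
-/

open MeasureTheory Finset Matrix

/-- Multi-indices in `p` variables of total degree at most `d`. -/
abbrev MIdx (p d : ℕ) := {α : Fin p → Fin (d + 1) // ∑ i, (α i : ℕ) ≤ d}

/-- The monomial `x ^ α`. -/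
noncomputable def mon {p d : ℕ} (α : MIdx p d) (x : Fin p → ℝ) : ℝ :=
  ∏ i, x i ^ (α.1 i : ℕ)

/-- The moment matrix `M_d(μ)`, with entries `∫ x^(α+β) dμ`. -/
noncomputable def momMat {p : ℕ} (d : ℕ) (μ : Measure (Fin p → ℝ)) :
    Matrix (MIdx p d) (MIdx p d) ℝ :=
  fun α β => ∫ x, mon α x * mon β x ∂μ

/-- Evaluation of the polynomial with coefficient vector `c` at `x`. -/
noncomputable def peval {p d : ℕ} (c : MIdx p d → ℝ) (x : Fin p → ℝ) : ℝ :=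
  ∑ α, c α * mon α x

/-- The vector of monomials `v_d(x)`. -/
noncomputable def vvec {p : ℕ} (d : ℕ) (x : Fin p → ℝ) : MIdx p d → ℝ :=
  fun α => mon α x

/-- Graded lexicographic (strict) order: `glex α β` means `α <_gl β`. -/
def glex {p d : ℕ} (α β : MIdx p d) : Prop :=
  (∑ i, (α.1 i : ℕ)) < (∑ i, (β.1 i : ℕ)) ∨
    ((∑ i, (α.1 i : ℕ)) = (∑ i, (β.1 i : ℕ)) ∧
      ∃ i, (∀ j, j < i → α.1 j = β.1 j) ∧ (β.1 i : ℕ) < (α.1 i : ℕ))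

open MvPolynomial

namespace MIdx

variable {p d : ℕ}

noncomputable def toFinsupp (α : MIdx p d) : Fin p →₀ ℕ :=
  Finsupp.equivFunOnFinite.symm fun i => (α.1 i : ℕ)

lemma toFinsupp_injective : Function.Injective (toFinsupp (p := p) (d := d)) := by
  intro α β h
  ext i
  exact congrArg (· i) h

lemma exists_toFinsupp_eq {m : Fin p →₀ ℕ} (hm : m.degree ≤ d) :
    ∃ α : MIdx p d, α.toFinsupp = m := by
  rw [Finsupp.degree_eq_sum] at hm
  have hle : ∀ i, m i ≤ d := fun i =>
    (single_le_sum (fun j _ => Nat.zero_le (m j)) (mem_univ i)).trans hm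
  exact ⟨⟨fun i => ⟨m i, Nat.lt_succ_of_le (hle i)⟩, hm⟩, Finsupp.ext fun _ => rfl⟩

end MIdx

variable {p d : ℕ}

lemma mon_eq_prod_toFinsupp (α : MIdx p d) (x : Fin p → ℝ) :
    mon α x = ∏ i, x i ^ α.toFinsupp i := rfl

lemma continuous_mon (α : MIdx p d) : Continuous (mon α) := by
  unfold mon
  fun_prop

lemma MvPolynomial.eval_eq_sum_mon {P : MvPolynomial (Fin p) ℝ} (hP : P.totalDegree ≤ d)
    (x : Fin p → ℝ) : eval x P = ∑ α : MIdx p d, coeff α.toFinsupp P * mon α x := by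
  have hsupp : P.support ⊆ univ.image MIdx.toFinsupp := fun m hm => by
    obtain ⟨α, hα⟩ := MIdx.exists_toFinsupp_eq ((le_totalDegree hm).trans hP)
    exact mem_image.2 ⟨α, mem_univ _, hα⟩
  rw [eval_eq', sum_subset hsupp fun m _ hm => by simp [notMem_support_iff.1 hm],
    sum_image fun α _ β _ h => MIdx.toFinsupp_injective h]
  rfl

lemma eq_zero_of_peval_eq_zero {c : MIdx p d → ℝ} (h : ∀ x, peval c x = 0) : c = 0 := by
  set P : MvPolynomial (Fin p) ℝ := ∑ α : MIdx p d, monomial α.toFinsupp (c α)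
  have hP : P = 0 := MvPolynomial.funext fun x => by
    simpa [P, peval, eval_monomial, Finsupp.prod_pow, mon_eq_prod_toFinsupp] using h x
  funext α
  have hcoeff : coeff α.toFinsupp P = c α := by
    simp [P, coeff_sum, coeff_monomial, MIdx.toFinsupp_injective.eq_iff]
  simpa [hP] using hcoeff.symm

lemma eq_of_mulVec_vvec_eq {M N : Matrix (MIdx p d) (MIdx p d) ℝ}
    (h : ∀ x, M *ᵥ vvec d x = N *ᵥ vvec d x) : M = N := by
  ext α β
  have hrow : (fun γ => M α γ - N α γ) = 0 := eq_zero_of_peval_eq_zero fun x => by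
    simpa [peval, sub_mul, mulVec, dotProduct, vvec] using sub_eq_zero.2 (congrFun (h x) α)
  exact sub_eq_zero.1 (congrFun hrow β)

noncomputable def affineMonPoly (A : Matrix (Fin p) (Fin p) ℝ) (b : Fin p → ℝ) (α : MIdx p d) :
    MvPolynomial (Fin p) ℝ :=
  ∏ i, (∑ j, C (A i j) * X j + C (b i)) ^ (α.1 i : ℕ)

lemma eval_affineMonPoly (A : Matrix (Fin p) (Fin p) ℝ) (b : Fin p → ℝ) (α : MIdx p d)
    (x : Fin p → ℝ) : eval x (affineMonPoly A b α) = mon α (A *ᵥ x + b) := by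
  simp [affineMonPoly, mon, mulVec, dotProduct]

lemma totalDegree_affineMonPoly_le (A : Matrix (Fin p) (Fin p) ℝ) (b : Fin p → ℝ)
    (α : MIdx p d) : (affineMonPoly A b α).totalDegree ≤ d := by
  have hlin : ∀ i, (∑ j, C (A i j) * X j + C (b i)).totalDegree ≤ 1 := fun i =>
    (totalDegree_add _ _).trans <| max_le
      ((totalDegree_finsetSum _ _).trans <| Finset.sup_le fun j _ =>
        (totalDegree_mul _ _).trans (by simp [totalDegree_X]))
      (by simp)
  refine (totalDegree_finsetProd _ _).trans <| le_trans (sum_le_sum fun i _ => ?_) α.2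
  calc _ ≤ (α.1 i : ℕ) * 1 := (totalDegree_pow _ _).trans (Nat.mul_le_mul_left _ (hlin i))
    _ = α.1 i := Nat.mul_one _

/-- Row `α` holds the coefficients of `(A x + b) ^ α` in the monomial basis. -/
noncomputable def transferMat (d : ℕ) (A : Matrix (Fin p) (Fin p) ℝ) (b : Fin p → ℝ) :
    Matrix (MIdx p d) (MIdx p d) ℝ :=
  fun α β => coeff β.toFinsupp (affineMonPoly A b α)

lemma transferMat_mulVec_vvec (A : Matrix (Fin p) (Fin p) ℝ) (b : Fin p → ℝ) (x : Fin p → ℝ) :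
    transferMat d A b *ᵥ vvec d x = vvec d (A *ᵥ x + b) := by
  funext α
  rw [vvec, ← eval_affineMonPoly, eval_eq_sum_mon (totalDegree_affineMonPoly_le A b α)]
  rfl

lemma transferMat_one_zero : transferMat d (1 : Matrix (Fin p) (Fin p) ℝ) 0 = 1 :=
  eq_of_mulVec_vvec_eq fun x => by
    rw [transferMat_mulVec_vvec, one_mulVec, one_mulVec, add_zero]

lemma transferMat_mul_transferMat (A B : Matrix (Fin p) (Fin p) ℝ) (b c : Fin p → ℝ) :
    transferMat d B c * transferMat d A b = transferMat d (B * A) (B *ᵥ b + c) :=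
  eq_of_mulVec_vvec_eq fun x => by
    rw [← mulVec_mulVec, transferMat_mulVec_vvec, transferMat_mulVec_vvec,
      transferMat_mulVec_vvec, mulVec_add, mulVec_mulVec, add_assoc]

lemma isUnit_transferMat {A : Matrix (Fin p) (Fin p) ℝ} (hA : IsUnit A) (b : Fin p → ℝ) :
    IsUnit (transferMat d A b) := by
  have hAdet : IsUnit A.det := (isUnit_iff_isUnit_det A).1 hA
  have hleft : transferMat d A⁻¹ (-(A⁻¹ *ᵥ b)) * transferMat d A b = 1 := by
    rw [transferMat_mul_transferMat, nonsing_inv_mul A hAdet, add_neg_cancel,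
      transferMat_one_zero]
  exact (isUnit_iff_isUnit_det _).2 (isUnit_det_of_left_inverse hleft)

lemma integrable_mon_mul_mon {μ : Measure (Fin p → ℝ)}
    (hmom : ∀ α : Fin p → ℕ, Integrable (fun x => ∏ i, x i ^ α i) μ) (α β : MIdx p d) :
    Integrable (fun x => mon α x * mon β x) μ := by
  simpa [mon, pow_add, prod_mul_distrib] using hmom fun i => (α.1 i : ℕ) + β.1 i

lemma momMat_map_eq_mul_mul_transpose {μ : Measure (Fin p → ℝ)}
    (hint : ∀ α β : MIdx p d, Integrable (fun x => mon α x * mon β x) μ)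
    {f : (Fin p → ℝ) → Fin p → ℝ} (hf : AEMeasurable f μ)
    {T : Matrix (MIdx p d) (MIdx p d) ℝ} (hT : ∀ x, vvec d (f x) = T *ᵥ vvec d x) :
    momMat d (μ.map f) = T * momMat d μ * Tᵀ := by
  have hmon : ∀ γ x, mon γ (f x) = ∑ δ, T γ δ * mon δ x := fun γ x => congrFun (hT x) γ
  ext α β
  have hint' : ∀ γ δ, Integrable (fun x => T α γ * T β δ * (mon γ x * mon δ x)) μ :=
    fun γ δ => (hint γ δ).const_mul _
  calc momMat d (μ.map f) α β = ∫ x, mon α (f x) * mon β (f x) ∂μ :=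
        integral_map hf ((continuous_mon α).mul (continuous_mon β)).aestronglyMeasurable
    _ = ∫ x, ∑ γ, ∑ δ, T α γ * T β δ * (mon γ x * mon δ x) ∂μ := by
        simp only [hmon, sum_mul_sum]
        congr 1; funext x
        exact sum_congr rfl fun γ _ => sum_congr rfl fun δ _ => by ring
    _ = ∑ γ, ∑ δ, T α γ * T β δ * momMat d μ γ δ := by
        rw [integral_finsetSum _ fun γ _ => integrable_finsetSum _ fun δ _ => hint' γ δ]
        refine sum_congr rfl fun γ _ => ?_
        rw [integral_finsetSum _ fun δ _ => hint' γ δ]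
        exact sum_congr rfl fun δ _ => integral_const_mul _ _
    _ = (T * momMat d μ * Tᵀ) α β := by
        simp only [mul_apply, transpose_apply, sum_mul]
        rw [sum_comm]
        exact sum_congr rfl fun δ _ => sum_congr rfl fun γ _ => by ring

lemma Matrix.PosDef.mul_mul_transpose {n : Type*} [Fintype n] [DecidableEq n]
    {M T : Matrix n n ℝ} (hM : M.PosDef) (hT : IsUnit T) : (T * M * Tᵀ).PosDef := by
  simpa using hM.mul_mul_conjTranspose_same (vecMul_injective_iff_isUnit.2 hT)

lemma Matrix.mulVec_dotProduct_inv_mul_mul_transpose {n : Type*} [Fintype n] [DecidableEq n]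
    (M : Matrix n n ℝ) {T : Matrix n n ℝ} (hT : IsUnit T) (v : n → ℝ) :
    T *ᵥ v ⬝ᵥ (T * M * Tᵀ)⁻¹ *ᵥ (T *ᵥ v) = v ⬝ᵥ M⁻¹ *ᵥ v := by
  have hTdet : IsUnit T.det := (isUnit_iff_isUnit_det T).1 hT
  have hTtdet : IsUnit Tᵀ.det := by rwa [det_transpose]
  rw [mul_inv_rev, mul_inv_rev, mulVec_mulVec, dotProduct_mulVec, vecMul_mulVec,
    ← dotProduct_mulVec, ← mul_assoc, ← mul_assoc, mul_nonsing_inv _ hTtdet, one_mul,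
    nonsing_inv_mul_cancel_right _ _ hTdet]

theorem inverse_moment_sos_affine_invariant_general {p d : ℕ} (μ : Measure (Fin p → ℝ))
    (hmom : ∀ α : Fin p → ℕ, Integrable (fun x => ∏ i, x i ^ α i) μ)
    (hpd : (momMat d μ).PosDef)
    (A : Matrix (Fin p) (Fin p) ℝ) (hA : IsUnit A) (b : Fin p → ℝ) :
    (momMat d (Measure.map (fun x => A *ᵥ x + b) μ)).PosDef ∧
      ∀ x : Fin p → ℝ,
        vvec d x ⬝ᵥ (momMat d μ)⁻¹ *ᵥ vvec d x =
          vvec d (A *ᵥ x + b) ⬝ᵥ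
            (momMat d (Measure.map (fun x => A *ᵥ x + b) μ))⁻¹ *ᵥ
              vvec d (A *ᵥ x + b) := by
  have hT := isUnit_transferMat (d := d) hA b
  have hf : Continuous fun x => A *ᵥ x + b := by fun_prop
  have hmap : momMat d (μ.map fun x => A *ᵥ x + b) =
      transferMat d A b * momMat d μ * (transferMat d A b)ᵀ :=
    momMat_map_eq_mul_mul_transpose (integrable_mon_mul_mon hmom) hf.aemeasurable
      fun x => (transferMat_mulVec_vvec A b x).symm
  refine ⟨hmap ▸ hpd.mul_mul_transpose hT, fun x => ?_⟩
  rw [hmap, ← transferMat_mulVec_vvec, Matrix.mulVec_dotProduct_inv_mul_mul_transpose _ hT]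

/-- affine invariance of the inverse moment matrix SOS polynomial. -/
theorem inverse_moment_sos_affine_invariant {p d : ℕ} (μ : Measure (Fin p → ℝ))
    [IsProbabilityMeasure μ]
    (hmom : ∀ α : Fin p → ℕ, Integrable (fun x => ∏ i, x i ^ α i) μ)
    (hpd : (momMat d μ).PosDef)
    (A : Matrix (Fin p) (Fin p) ℝ) (hA : IsUnit A) (b : Fin p → ℝ) :
    (momMat d (Measure.map (fun x => A *ᵥ x + b) μ)).PosDef ∧
      ∀ x : Fin p → ℝ,
        vvec d x ⬝ᵥ (momMat d μ)⁻¹ *ᵥ vvec d x =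
          vvec d (A *ᵥ x + b) ⬝ᵥ
            (momMat d (Measure.map (fun x => A *ᵥ x + b) μ))⁻¹ *ᵥ
              vvec d (A *ᵥ x + b) :=
  inverse_moment_sos_affine_invariant_general μ hmom hpd A hA b
end

section
/- Let μ be a Borel probability measure on ℝ^p with mean m = ∫ x dμ, second moment matrix S = ∫ x x^T dμ, and covariance V = S − m m^T assumed positive definite. Then the inverse moment matrix SOS polynomial of degree 2 satisfies Q_{μ,1}(x) = 1 + (x − m)^T V^{-1} (x − m) for all x ∈ ℝ^p. -/
/-! Indexing the degree-one moment matrix by `Unit ⊕ Fin p` (constant monomial, then the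
coordinates) turns it into the block matrix `[[1, mᵀ], [m, V + m mᵀ]]`. Eliminating the corner `1`
(Schur complement) factors it as `L D Lᵀ` with `L = [[1, 0], [m, 1]]` and `D = diag(1, V)`.
Since `L (1, x - m) = (1, x)`, the form `(1, x)ᵀ (L D Lᵀ)⁻¹ (1, x)` equals
`(1, x - m)ᵀ D⁻¹ (1, x - m) = 1 + (x - m)ᵀ V⁻¹ (x - m)`. -/

open MeasureTheory Finset Matrix

section QuadraticForm

variable {ι κ R : Type*} [Fintype ι] [Fintype κ] [DecidableEq ι] [DecidableEq κ] [CommRing R]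

theorem dotProduct_inv_submatrix_mulVec_comp (A : Matrix ι ι R) (e : κ ≃ ι) (v : ι → R) :
    (v ∘ e) ⬝ᵥ (A.submatrix e e)⁻¹ *ᵥ (v ∘ e) = v ⬝ᵥ A⁻¹ *ᵥ v := by
  simp [submatrix_mulVec_equiv, Function.comp_assoc]

theorem dotProduct_inv_mul_mul_transpose_mulVec (L D : Matrix ι ι R) (hL : IsUnit L.det)
    (w : ι → R) : (L *ᵥ w) ⬝ᵥ (L * D * Lᵀ)⁻¹ *ᵥ (L *ᵥ w) = w ⬝ᵥ D⁻¹ *ᵥ w := by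
  have hw : L⁻¹ *ᵥ (L *ᵥ w) = w := by rw [mulVec_mulVec, nonsing_inv_mul _ hL, one_mulVec]
  rw [Matrix.mul_inv_rev, Matrix.mul_inv_rev, ← transpose_nonsing_inv, ← mulVec_mulVec,
    ← mulVec_mulVec, hw, dotProduct_mulVec, vecMul_transpose, hw]

theorem fromBlocks_one_replicateRow_replicateCol_eq (m : ι → R) (V : Matrix ι ι R) :
    fromBlocks (1 : Matrix Unit Unit R) (replicateRow Unit m) (replicateCol Unit m)
        (V + vecMulVec m m) =
      fromBlocks 1 0 (replicateCol Unit m) 1 * fromBlocks 1 0 0 V *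
        (fromBlocks 1 0 (replicateCol Unit m) 1)ᵀ := by
  simp [fromBlocks_transpose, fromBlocks_multiply, vecMulVec_eq Unit, add_comm]

theorem sumElim_one_dotProduct_inv_fromBlocks_mulVec (m x : ι → R) (V : Matrix ι ι R)
    (hV : IsUnit V.det) :
    Sum.elim (1 : Unit → R) x ⬝ᵥ (fromBlocks (1 : Matrix Unit Unit R) (replicateRow Unit m)
        (replicateCol Unit m) (V + vecMulVec m m))⁻¹ *ᵥ Sum.elim (1 : Unit → R) x =
      1 + (x - m) ⬝ᵥ V⁻¹ *ᵥ (x - m) := by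
  set L := fromBlocks (1 : Matrix Unit Unit R) 0 (replicateCol Unit m) (1 : Matrix ι ι R)
  have hL : IsUnit L.det := by simp [L]
  have hLx : L *ᵥ Sum.elim 1 (x - m) = Sum.elim (1 : Unit → R) x := by
    have hm : replicateCol Unit m *ᵥ 1 = m := by ext; simp [mulVec, dotProduct]
    simp [L, fromBlocks_mulVec, hm]
  rw [fromBlocks_one_replicateRow_replicateCol_eq, ← hLx,
    dotProduct_inv_mul_mul_transpose_mulVec _ _ hL,
    inv_fromBlocks_zero₁₂_of_isUnit_iff _ _ _ (by simp [isUnit_iff_isUnit_det, hV])]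
  simp [fromBlocks_mulVec, sumElim_dotProduct_sumElim]

end QuadraticForm

def degOneMIdx (p : ℕ) : Unit ⊕ Fin p → MIdx p 1
  | .inl _ => ⟨0, by simp⟩
  | .inr i => ⟨Pi.single i 1, by simp [Pi.single_apply, apply_ite]⟩

theorem degOneMIdx_bijective (p : ℕ) : Function.Bijective (degOneMIdx p) := by
  constructor
  · rintro (_ | i) (_ | j) h <;> simp [degOneMIdx, eq_comm (a := (0 : Fin p → Fin 2))] at h ⊢
    simpa [Pi.single_apply, eq_comm] using congrFun h j
  · rintro ⟨α, hα⟩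
    by_cases! hα₀ : ∃ i, (α i : ℕ) ≠ 0
    · obtain ⟨i, hi⟩ := hα₀
      have hsupp := Finset.sum_le_one_iff.mp hα
      refine ⟨.inr i, Subtype.ext <| funext fun j => Fin.ext ?_⟩
      by_cases hj : j = i
      · subst hj
        simp [degOneMIdx, (hsupp j j (mem_univ _) (mem_univ _) hi hi).2]
      · have hαj : (α j : ℕ) = 0 := by
          by_contra hαj
          exact hj (hsupp j i (mem_univ _) (mem_univ _) hαj hi).1
        simp [degOneMIdx, hj, hαj]
    · exact ⟨.inl (), Subtype.ext <| funext fun i => Fin.ext (hα₀ i).symm⟩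

noncomputable def degOneMIdxEquiv (p : ℕ) : Unit ⊕ Fin p ≃ MIdx p 1 :=
  .ofBijective _ (degOneMIdx_bijective p)

theorem vvec_one_comp_degOneMIdxEquiv {p : ℕ} (x : Fin p → ℝ) :
    vvec 1 x ∘ degOneMIdxEquiv p = Sum.elim (1 : Unit → ℝ) x := by
  ext (_ | i) <;> simp [degOneMIdxEquiv, degOneMIdx, vvec, mon, Pi.single_apply, apply_ite]

theorem momMat_one_submatrix_degOneMIdxEquiv {p : ℕ} (μ : Measure (Fin p → ℝ))
    [IsProbabilityMeasure μ] :
    (momMat 1 μ).submatrix (degOneMIdxEquiv p) (degOneMIdxEquiv p) =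
      fromBlocks 1 (replicateRow Unit fun j => ∫ x, x j ∂μ)
        (replicateCol Unit fun i => ∫ x, x i ∂μ) (of fun i j => ∫ x, x i * x j ∂μ) := by
  have hentry : ∀ a b, (momMat 1 μ).submatrix (degOneMIdxEquiv p) (degOneMIdxEquiv p) a b =
      ∫ x, Sum.elim (1 : Unit → ℝ) x a * Sum.elim (1 : Unit → ℝ) x b ∂μ := fun a b => by
    simp only [← vvec_one_comp_degOneMIdxEquiv]
    rfl
  ext (_ | i) (_ | j) <;> rw [hentry] <;> simp

theorem inverse_moment_sos_deg_one_mahalanobis_general {p : ℕ} (μ : Measure (Fin p → ℝ))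
    [IsProbabilityMeasure μ]
    (m : Fin p → ℝ) (hm : m = fun i => ∫ x, x i ∂μ)
    (S : Matrix (Fin p) (Fin p) ℝ) (hS : S = fun i j => ∫ x, x i * x j ∂μ)
    (V : Matrix (Fin p) (Fin p) ℝ) (hV : V = S - vecMulVec m m)
    (hVpd : V.PosDef) :
    ∀ x : Fin p → ℝ,
      vvec 1 x ⬝ᵥ (momMat 1 μ)⁻¹ *ᵥ vvec 1 x =
        1 + (x - m) ⬝ᵥ V⁻¹ *ᵥ (x - m) := by
  intro x
  have hSV : of (fun i j => ∫ x, x i * x j ∂μ) = V + vecMulVec m m := by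
    rw [hV, sub_add_cancel, hS]
    rfl
  rw [← dotProduct_inv_submatrix_mulVec_comp _ (degOneMIdxEquiv p), vvec_one_comp_degOneMIdxEquiv,
    momMat_one_submatrix_degOneMIdxEquiv, ← hm, hSV,
    sumElim_one_dotProduct_inv_fromBlocks_mulVec _ _ _ hVpd.det_pos.ne'.isUnit]

/-- for `d = 1`, the inverse moment matrix SOS polynomial is
`1 + (x - m)ᵀ V⁻¹ (x - m)`, the (shifted squared) Mahalanobis distance. -/
theorem inverse_moment_sos_deg_one_mahalanobis {p : ℕ} (μ : Measure (Fin p → ℝ))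
    [IsProbabilityMeasure μ]
    (hmom : ∀ α : Fin p → ℕ, Integrable (fun x => ∏ i, x i ^ α i) μ)
    (m : Fin p → ℝ) (hm : m = fun i => ∫ x, x i ∂μ)
    (S : Matrix (Fin p) (Fin p) ℝ) (hS : S = fun i j => ∫ x, x i * x j ∂μ)
    (V : Matrix (Fin p) (Fin p) ℝ) (hV : V = S - vecMulVec m m)
    (hVpd : V.PosDef) :
    ∀ x : Fin p → ℝ,
      vvec 1 x ⬝ᵥ (momMat 1 μ)⁻¹ *ᵥ vvec 1 x =
        1 + (x - m) ⬝ᵥ V⁻¹ *ᵥ (x - m) :=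
  inverse_moment_sos_deg_one_mahalanobis_general μ m hm S hS V hV hVpd
end
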